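/- arXiv:2004.03923 — 2 statements merged into one kernel-verified Lean document; each statement's English description precedes it below -/
import Mathlib

section
/- Let Q be an n×n real symmetric positive semidefinite matrix with positive semidefinite square root M, let C be an m×n real matrix with rank C = m and Moore–Penrose pseudoinverse C⁺, let N = I − C⁺C, and let (MN)⁺ be the Moore–Penrose pseudoinverse of MN. Then for every ε > 0 the matrix C(Q + εI)⁻¹Cᵀ is invertible, and (C(Q + εI)⁻¹Cᵀ)⁻¹ tends to C⁺ᵀ M (I − (MN)(MN)⁺) M C⁺ as ε → 0⁺. -/
/-!
Write `A = Q + εI`, `B = MN` and `P = BB⁺`. Since `N = I - C⁺C` is the orthogonal projector onto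
`ker C` and `CC⁺ = I`, the inverse of `CA⁻¹Cᵀ` is `C⁺ᵀ (A - AN G NA) C⁺` for any `G` inverting
`NAN` on the range of `N`; here `G = (BᵀB + εI)⁻¹` does. The push-through identity
`B(BᵀB + εI)⁻¹ = (BBᵀ + εI)⁻¹B` rewrites `AN G NA` in terms of the resolvents `ε(BBᵀ + εI)⁻¹` and
`ε(BᵀB + εI)⁻¹`, which converge to the projectors `I - BB⁺` and `I - BᵀB⁺ᵀ`. Hence the regularized
Schur complement `A - AN G NA` tends to `Q - MPM = M(I - P)M`.
-/

open Matrix Filter Topology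

/-- `Ap` is the Moore–Penrose pseudoinverse of `A`. -/
def IsMoorePenrose {m n : ℕ} (A : Matrix (Fin m) (Fin n) ℝ)
    (Ap : Matrix (Fin n) (Fin m) ℝ) : Prop :=
  A * Ap * A = A ∧ Ap * A * Ap = Ap ∧ (A * Ap)ᵀ = A * Ap ∧ (Ap * A)ᵀ = Ap * A

namespace Matrix

variable {m n : Type*} [Fintype m] [Fintype n] [DecidableEq m] [DecidableEq n]

omit [DecidableEq m] [DecidableEq n] in
lemma posSemidef_self_mul_transpose (B : Matrix m n ℝ) : (B * Bᵀ).PosSemidef := by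
  simpa using posSemidef_self_mul_conjTranspose B

lemma PosSemidef.isUnit_det_add_smul_one {S : Matrix n n ℝ} (hS : S.PosSemidef) {ε : ℝ}
    (hε : 0 < ε) : IsUnit (S + ε • 1).det :=
  (isUnit_iff_isUnit_det _).mp (PosDef.posSemidef_add hS (PosDef.one.smul hε)).isUnit

lemma mul_inv_transpose_mul_add_smul_one (B : Matrix m n ℝ) {ε : ℝ} (hε : 0 < ε) :
    B * (Bᵀ * B + ε • 1)⁻¹ = (B * Bᵀ + ε • 1)⁻¹ * B := by
  have hK : IsUnit (Bᵀ * B + ε • 1).det := by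
    simpa using (posSemidef_self_mul_transpose Bᵀ).isUnit_det_add_smul_one hε
  have hL := (posSemidef_self_mul_transpose B).isUnit_det_add_smul_one hε
  have hpush : (B * Bᵀ + ε • 1) * B = B * (Bᵀ * B + ε • 1) := by
    simp only [Matrix.add_mul, Matrix.mul_add, Matrix.smul_mul, Matrix.mul_smul, Matrix.one_mul,
      Matrix.mul_one, Matrix.mul_assoc]
  calc B * (Bᵀ * B + ε • 1)⁻¹
      = (B * Bᵀ + ε • 1)⁻¹ * ((B * Bᵀ + ε • 1) * B) * (Bᵀ * B + ε • 1)⁻¹ := by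
        rw [nonsing_inv_mul_cancel_left _ _ hL]
    _ = (B * Bᵀ + ε • 1)⁻¹ * B := by
        rw [hpush, Matrix.mul_assoc, Matrix.mul_assoc, mul_nonsing_inv _ hK, Matrix.mul_one]

lemma commute_nonsing_inv_right {R : Type*} [CommRing R] {X K : Matrix n n R}
    (hK : IsUnit K.det) (h : Commute X K) : Commute X K⁻¹ :=
  calc X * K⁻¹ = K⁻¹ * (K * X) * K⁻¹ := by rw [nonsing_inv_mul_cancel_left _ _ hK]
    _ = K⁻¹ * X := by rw [← h.eq, Matrix.mul_assoc, Matrix.mul_assoc,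
        mul_nonsing_inv _ hK, Matrix.mul_one]

omit [DecidableEq n] in
lemma mul_eq_one_of_rank_eq_card {K : Type*} [Field K] {C : Matrix m n K} {Cp : Matrix n m K}
    (hrank : C.rank = Fintype.card m) (hCp : C * Cp * C = C) : C * Cp = 1 := by
  have hrange : LinearMap.range C.mulVecLin = ⊤ :=
    Submodule.eq_top_of_finrank_eq (by rw [Module.finrank_fintype_fun_eq_card, ← hrank]; rfl)
  have hsurj : Function.Surjective C.mulVec := LinearMap.range_eq_top.mp hrange
  obtain ⟨D, hD⟩ := mulVec_surjective_iff_exists_right_inverse.mp hsurj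
  calc C * Cp = C * Cp * (C * D) := by rw [hD, Matrix.mul_one]
    _ = 1 := by rw [← Matrix.mul_assoc, hCp, hD]

lemma mul_inv_mul_transpose_mul_schur_eq_one {R : Type*} [CommRing R] {C : Matrix m n R}
    {Cp : Matrix n m R} {A N G : Matrix n n R} (hA : IsUnit A.det) (hCCp : C * Cp = 1)
    (hCN : C * N = 0) (hCtCpt : Cᵀ * Cpᵀ = 1 - N) (hG : N * A * N * G * N = N) :
    C * A⁻¹ * Cᵀ * (Cpᵀ * (A - A * N * G * N * A) * Cp) = 1 := by
  have hNW : N * (A - A * N * G * N * A) = 0 := by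
    simp only [Matrix.mul_sub, ← Matrix.mul_assoc, hG, sub_self]
  calc C * A⁻¹ * Cᵀ * (Cpᵀ * (A - A * N * G * N * A) * Cp)
      = C * A⁻¹ * ((1 - N) * (A - A * N * G * N * A)) * Cp := by
        rw [← hCtCpt]; simp only [Matrix.mul_assoc]
    _ = C * (A⁻¹ * A) * Cp - C * N * (G * N * A * Cp) := by
        rw [Matrix.sub_mul, hNW, Matrix.one_mul, sub_zero]
        simp only [Matrix.mul_sub, Matrix.sub_mul, Matrix.mul_assoc,
          nonsing_inv_mul_cancel_left _ _ hA]
    _ = 1 := by rw [nonsing_inv_mul _ hA, Matrix.mul_one, hCCp, hCN, Matrix.zero_mul, sub_zero]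

lemma add_smul_one_mul_inv_mul_add_smul_one_eq {Q N : Matrix n n ℝ} {M : Matrix n m ℝ}
    {B : Matrix m n ℝ} (hQN : Q * N = M * B) (hNQ : N * Q = Bᵀ * Mᵀ) {ε : ℝ} (hε : 0 < ε) :
    (Q + ε • 1) * N * (Bᵀ * B + ε • 1)⁻¹ * N * (Q + ε • 1)
      = M * (1 - ε • (B * Bᵀ + ε • 1)⁻¹) * Mᵀ + M * (ε • (B * Bᵀ + ε • 1)⁻¹ * B) * N
        + N * (Bᵀ * (ε • (B * Bᵀ + ε • 1)⁻¹)) * Mᵀ + ε • (N * (ε • (Bᵀ * B + ε • 1)⁻¹) * N) := by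
  set Si := (B * Bᵀ + ε • 1)⁻¹
  set Hi := (Bᵀ * B + ε • 1)⁻¹
  have hBHi : B * Hi = Si * B := mul_inv_transpose_mul_add_smul_one B hε
  have hHiBt : Hi * Bᵀ = Bᵀ * Si := by
    simpa using (mul_inv_transpose_mul_add_smul_one Bᵀ hε).symm
  have hBHiBt : B * Hi * Bᵀ = 1 - ε • Si := by
    have h0 := nonsing_inv_mul _ ((posSemidef_self_mul_transpose B).isUnit_det_add_smul_one hε)
    rw [Matrix.mul_add, Matrix.mul_smul, Matrix.mul_one] at h0
    rw [hBHi, Matrix.mul_assoc, ← eq_sub_of_add_eq h0]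
  have hAN : (Q + ε • 1) * N = M * B + ε • N := by
    rw [Matrix.add_mul, hQN, smul_mul, Matrix.one_mul]
  have hNA : N * (Q + ε • 1) = Bᵀ * Mᵀ + ε • N := by
    rw [Matrix.mul_add, hNQ, Matrix.mul_smul, Matrix.mul_one]
  calc (Q + ε • 1) * N * Hi * N * (Q + ε • 1)
      = (M * B + ε • N) * Hi * (Bᵀ * Mᵀ + ε • N) := by
        rw [Matrix.mul_assoc _ N (Q + ε • 1), hNA, hAN]
    _ = M * (B * Hi * Bᵀ) * Mᵀ + M * (ε • (B * Hi)) * N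
        + N * (ε • (Hi * Bᵀ)) * Mᵀ + ε • (N * (ε • Hi) * N) := by
        simp only [Matrix.add_mul, Matrix.mul_add, Matrix.smul_mul, Matrix.mul_smul, smul_add,
          Matrix.mul_assoc]
        abel
    _ = _ := by rw [hBHiBt, hBHi, hHiBt, Matrix.smul_mul ε Si B, Matrix.mul_smul Bᵀ ε Si]

omit [DecidableEq m] in
lemma mul_add_smul_one_mul_inv_mul_eq_self {Q N : Matrix n n ℝ} {B : Matrix m n ℝ}
    (hN : Nᵀ = N) (hNN : N * N = N) (hBN : B * N = B) (hNQN : N * Q * N = Bᵀ * B) {ε : ℝ}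
    (hε : 0 < ε) : N * (Q + ε • 1) * N * (Bᵀ * B + ε • 1)⁻¹ * N = N := by
  set K := Bᵀ * B + ε • 1
  have hK : IsUnit K.det := by
    simpa using (posSemidef_self_mul_transpose Bᵀ).isUnit_det_add_smul_one hε
  have hNBt : N * Bᵀ = Bᵀ := by rw [← hN, ← transpose_mul, hBN]
  have hNAN : N * (Q + ε • 1) * N = K * N := by
    rw [Matrix.mul_add, Matrix.add_mul, hNQN, Matrix.add_mul, Matrix.mul_assoc Bᵀ B N, hBN,
      Matrix.mul_smul, Matrix.mul_one, Matrix.smul_mul, hNN, Matrix.smul_mul, Matrix.one_mul]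
  have hNK : Commute N K := by
    rw [Commute, SemiconjBy, Matrix.mul_add, Matrix.add_mul, ← Matrix.mul_assoc, hNBt,
      Matrix.mul_assoc, hBN, Matrix.mul_smul, Matrix.smul_mul, Matrix.mul_one, Matrix.one_mul]
  rw [hNAN, Matrix.mul_assoc K N, (commute_nonsing_inv_right hK hNK).eq, Matrix.mul_assoc,
    Matrix.mul_assoc, hNN, ← Matrix.mul_assoc, mul_nonsing_inv _ hK, Matrix.one_mul]

end Matrix

namespace IsMoorePenrose

variable {m n : ℕ} {A : Matrix (Fin m) (Fin n) ℝ} {Ap : Matrix (Fin n) (Fin m) ℝ}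

lemma transpose (h : IsMoorePenrose A Ap) : IsMoorePenrose Aᵀ Apᵀ := by
  obtain ⟨h1, h2, h3, h4⟩ := h
  refine ⟨?_, ?_, ?_, ?_⟩
  · simpa [Matrix.mul_assoc] using congrArg Matrix.transpose h1
  · simpa [Matrix.mul_assoc] using congrArg Matrix.transpose h2
  · rw [transpose_mul, transpose_transpose, transpose_transpose, ← transpose_mul, h4]
  · rw [transpose_mul, transpose_transpose, transpose_transpose, ← transpose_mul, h3]

lemma transpose_mul_mul_pinv (h : IsMoorePenrose A Ap) : Aᵀ * (A * Ap) = Aᵀ := by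
  conv_lhs => rw [← h.2.2.1]
  rw [← transpose_mul, h.1]

lemma mul_pinv_eq_mul_transpose_mul (h : IsMoorePenrose A Ap) :
    A * Ap = A * Aᵀ * (Apᵀ * Ap) := by
  calc A * Ap = A * (Ap * A) * Ap := by rw [← Matrix.mul_assoc, h.1]
    _ = A * Aᵀ * (Apᵀ * Ap) := by
      rw [← h.2.2.2, transpose_mul]; simp only [Matrix.mul_assoc]

lemma one_sub_mul_pinv_mul_eq_zero (h : IsMoorePenrose A Ap) : (1 - A * Ap) * A = 0 := by
  rw [Matrix.sub_mul, Matrix.one_mul, h.1, sub_self]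

lemma transpose_mul_one_sub_mul_pinv_eq_zero (h : IsMoorePenrose A Ap) :
    Aᵀ * (1 - A * Ap) = 0 := by
  rw [Matrix.mul_sub, Matrix.mul_one, h.transpose_mul_mul_pinv, sub_self]

lemma mul_one_sub_pinv_mul_eq_zero (h : IsMoorePenrose A Ap) : A * (1 - Ap * A) = 0 := by
  rw [Matrix.mul_sub, Matrix.mul_one, ← Matrix.mul_assoc, h.1, sub_self]

lemma isIdempotentElem_one_sub_pinv_mul (h : IsMoorePenrose A Ap) :
    IsIdempotentElem (1 - Ap * A) := by
  refine IsIdempotentElem.one_sub ?_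
  rw [IsIdempotentElem, ← Matrix.mul_assoc, h.2.1]

lemma transpose_one_sub_pinv_mul (h : IsMoorePenrose A Ap) : (1 - Ap * A)ᵀ = 1 - Ap * A := by
  rw [transpose_sub, transpose_one, h.2.2.2]

lemma tendsto_smul_inv_mul_transpose_add_smul_one (h : IsMoorePenrose A Ap) :
    Tendsto (fun ε : ℝ => ε • (A * Aᵀ + ε • 1)⁻¹) (𝓝[>] 0) (𝓝 (1 - A * Ap)) := by
  set P := A * Ap
  set Y := Apᵀ * Ap
  have hY : Y.PosSemidef := by simpa using posSemidef_self_mul_transpose Apᵀ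
  -- `P = AAᵀY` gives `R (1 + εY) = (1 - P) + εY` for `R = ε(AAᵀ + εI)⁻¹`, so `R` agrees with a
  -- function continuous at `ε = 0`.
  have hlim : Tendsto (fun ε : ℝ => ((1 - P) + ε • Y) * (1 + ε • Y)⁻¹) (𝓝 0) (𝓝 (1 - P)) := by
    have hinv : ContinuousAt Inv.inv (1 : Matrix (Fin m) (Fin m) ℝ) :=
      continuousAt_matrix_inv _ (by simp [Ring.inverse_eq_inv'])
    have hlin (X : Matrix (Fin m) (Fin m) ℝ) :
        Tendsto (fun ε : ℝ => X + ε • Y) (𝓝 0) (𝓝 X) := by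
      simpa using (tendsto_const_nhds (x := X)).add ((tendsto_id (x := 𝓝 (0 : ℝ))).smul_const Y)
    simpa using (hlin (1 - P)).mul (hinv.tendsto.comp (hlin 1))
  refine (hlim.mono_left nhdsWithin_le_nhds).congr' ?_
  filter_upwards [self_mem_nhdsWithin] with ε (hε : 0 < ε)
  set R := ε • (A * Aᵀ + ε • 1)⁻¹
  have hS := (posSemidef_self_mul_transpose A).isUnit_det_add_smul_one hε
  have hRS : R * (A * Aᵀ) = ε • (1 - R) := by
    have h0 := nonsing_inv_mul _ hS
    rw [Matrix.mul_add, Matrix.mul_smul, Matrix.mul_one] at h0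
    rw [smul_mul, ← eq_sub_of_add_eq h0]
  have hRP : R * (1 - P) = 1 - P := by
    have h0 : (A * Aᵀ + ε • 1) * (1 - P) = ε • (1 - P) := by
      rw [Matrix.add_mul, Matrix.mul_assoc, Matrix.mul_sub, Matrix.mul_one,
        h.transpose_mul_mul_pinv, sub_self, Matrix.mul_zero, zero_add, smul_mul, Matrix.one_mul]
    rw [smul_mul, ← Matrix.mul_smul, ← h0, nonsing_inv_mul_cancel_left _ _ hS]
  have hRY : R * (1 + ε • Y) = (1 - P) + ε • Y :=
    calc R * (1 + ε • Y) = R * (1 - P) + R * (A * Aᵀ) * Y + ε • (R * Y) := by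
          rw [Matrix.mul_assoc, ← h.mul_pinv_eq_mul_transpose_mul]
          simp only [Matrix.mul_add, Matrix.mul_sub, Matrix.mul_one, Matrix.mul_smul]
          abel
      _ = (1 - P) + ε • Y := by
          rw [hRP, hRS, smul_mul, Matrix.sub_mul, Matrix.one_mul, smul_sub]
          abel
  have hU : IsUnit (1 + ε • Y).det :=
    (isUnit_iff_isUnit_det _).mp (PosDef.one.add_posSemidef (hY.smul hε.le)).isUnit
  rw [← hRY, mul_nonsing_inv_cancel_right _ _ hU]

lemma tendsto_regularized_schur_complement {k : ℕ} {Q N : Matrix (Fin n) (Fin n) ℝ}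
    {M : Matrix (Fin n) (Fin k) ℝ} {B : Matrix (Fin k) (Fin n) ℝ} {Bp : Matrix (Fin n) (Fin k) ℝ}
    (h : IsMoorePenrose B Bp) (hQN : Q * N = M * B) (hNQ : N * Q = Bᵀ * Mᵀ) :
    Tendsto (fun ε : ℝ => (Q + ε • 1) - (Q + ε • 1) * N * (Bᵀ * B + ε • 1)⁻¹ * N * (Q + ε • 1))
      (𝓝[>] 0) (𝓝 (Q - M * (B * Bp) * Mᵀ)) := by
  have hR := h.tendsto_smul_inv_mul_transpose_add_smul_one
  have hH := h.transpose.tendsto_smul_inv_mul_transpose_add_smul_one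
  rw [transpose_transpose] at hH
  have hF : Continuous fun p : ℝ × Matrix (Fin k) (Fin k) ℝ × Matrix (Fin n) (Fin n) ℝ =>
      (Q + p.1 • 1) - (M * (1 - p.2.1) * Mᵀ + M * (p.2.1 * B) * N + N * (Bᵀ * p.2.1) * Mᵀ
        + p.1 • (N * p.2.2 * N)) := by
    fun_prop
  have hε : Tendsto (fun ε : ℝ => ε) (𝓝[>] 0) (𝓝 0) := nhdsWithin_le_nhds
  have hlim := (hF.tendsto _).comp (hε.prodMk_nhds (hR.prodMk_nhds hH))
  have hval : (Q + (0 : ℝ) • 1) - (M * (1 - (1 - B * Bp)) * Mᵀ + M * ((1 - B * Bp) * B) * N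
      + N * (Bᵀ * (1 - B * Bp)) * Mᵀ + (0 : ℝ) • (N * (1 - Bᵀ * Bpᵀ) * N))
        = Q - M * (B * Bp) * Mᵀ := by
    simp only [h.one_sub_mul_pinv_mul_eq_zero, h.transpose_mul_one_sub_mul_pinv_eq_zero,
      sub_sub_cancel, zero_smul, add_zero, Matrix.mul_zero, Matrix.zero_mul]
  rw [← hval]
  refine hlim.congr' ?_
  filter_upwards [self_mem_nhdsWithin] with ε (hε : 0 < ε)
  rw [Function.comp_apply, add_smul_one_mul_inv_mul_add_smul_one_eq hQN hNQ hε]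

end IsMoorePenrose

/-- For ε > 0 the matrix C(Q+εI)⁻¹Cᵀ is invertible, and its inverse converges to
R = C⁺ᵀ M (I − (MN)(MN)⁺) M C⁺ as ε → 0⁺. -/
theorem regularized_image_limit (n m : ℕ)
    (Q M : Matrix (Fin n) (Fin n) ℝ) (hQ : Q.PosSemidef)
    (hM : M.PosSemidef) (hMsq : M * M = Q)
    (C : Matrix (Fin m) (Fin n) ℝ) (hrankC : C.rank = m)
    (Cp : Matrix (Fin n) (Fin m) ℝ) (hCp : IsMoorePenrose C Cp)
    (N : Matrix (Fin n) (Fin n) ℝ) (hN : N = 1 - Cp * C)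
    (MNp : Matrix (Fin n) (Fin n) ℝ) (hMNp : IsMoorePenrose (M * N) MNp) :
    (∀ ε : ℝ, 0 < ε →
      IsUnit (C * (Q + ε • (1 : Matrix (Fin n) (Fin n) ℝ))⁻¹ * Cᵀ)) ∧
    Tendsto (fun ε : ℝ => (C * (Q + ε • (1 : Matrix (Fin n) (Fin n) ℝ))⁻¹ * Cᵀ)⁻¹)
      (nhdsWithin 0 (Set.Ioi 0))
      (nhds (Cpᵀ * M * (1 - M * N * MNp) * M * Cp)) := by
  have hMt : Mᵀ = M := by simpa [IsSymm] using hM.1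
  have hNt : Nᵀ = N := hN ▸ hCp.transpose_one_sub_pinv_mul
  have hNN : N * N = N := hN ▸ hCp.isIdempotentElem_one_sub_pinv_mul
  have hCN : C * N = 0 := hN ▸ hCp.mul_one_sub_pinv_mul_eq_zero
  have hCtCpt : Cᵀ * Cpᵀ = 1 - N := by rw [← transpose_mul, hCp.2.2.2, hN, sub_sub_cancel]
  have hCCp : C * Cp = 1 := mul_eq_one_of_rank_eq_card (by simpa using hrankC) hCp.1
  have hQN : Q * N = M * (M * N) := by rw [← hMsq, Matrix.mul_assoc]
  have hNQ : N * Q = (M * N)ᵀ * Mᵀ := by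
    rw [← hMsq, transpose_mul, hNt, hMt, Matrix.mul_assoc]
  have hinv : ∀ ε : ℝ, 0 < ε → C * (Q + ε • 1)⁻¹ * Cᵀ * (Cpᵀ * ((Q + ε • 1)
      - (Q + ε • 1) * N * ((M * N)ᵀ * (M * N) + ε • 1)⁻¹ * N * (Q + ε • 1)) * Cp) = 1 :=
    fun ε hε => mul_inv_mul_transpose_mul_schur_eq_one (hQ.isUnit_det_add_smul_one hε) hCCp hCN
      hCtCpt (mul_add_smul_one_mul_inv_mul_eq_self hNt hNN (by rw [Matrix.mul_assoc, hNN])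
        (by rw [← hMsq, transpose_mul, hNt, hMt]; simp only [Matrix.mul_assoc]) hε)
  refine ⟨fun ε hε => (isUnit_iff_isUnit_det _).mpr (isUnit_det_of_right_inverse (hinv ε hε)), ?_⟩
  have hconj : Continuous fun X : Matrix (Fin n) (Fin n) ℝ => Cpᵀ * X * Cp := by fun_prop
  have hlim := (hconj.tendsto _).comp (hMNp.tendsto_regularized_schur_complement hQN hNQ)
  rw [show Cpᵀ * M * (1 - M * N * MNp) * M * Cp = Cpᵀ * (Q - M * (M * N * MNp) * Mᵀ) * Cp by
    rw [hMt, ← hMsq]; simp only [Matrix.mul_sub, Matrix.sub_mul, Matrix.mul_one, Matrix.mul_assoc]]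
  refine hlim.congr' ?_
  filter_upwards [self_mem_nhdsWithin] with ε (hε : 0 < ε)
  exact (inv_eq_right_inv (hinv ε hε)).symm
end

section
/- Let Q be an n×n real symmetric positive semidefinite matrix with positive semidefinite square root M, let C be an m×n real matrix with rank C = m and Moore–Penrose pseudoinverse C⁺, and let N = I − C⁺C. Then for every ε > 0: (C(Q + εI)⁻¹Cᵀ)⁻¹ = ε(CCᵀ)⁻¹ + C⁺ᵀ M (I + ε⁻¹·M·N·N·M)⁻¹ M C⁺, where all inverses appearing exist (in particular CCᵀ, C(Q+εI)⁻¹Cᵀ and I + ε⁻¹MNNM are invertible). -/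
open Matrix

/-!
Put `S = Q + εI`, `T = I + ε⁻¹MNNM`, `X = M T⁻¹ M C⁺` and let `R` be the claimed inverse.
Since `C` has full row rank, `CC⁺ = I` and `C⁺ = Cᵀ(CCᵀ)⁻¹`, and `N` is the orthogonal projection
onto `ker C`. The matrix `Y = C⁺ - ε⁻¹NX` then satisfies `CY = I` and `SY = CᵀR`, the latter
because `ε⁻¹(MNNM)T⁻¹ = I - T⁻¹`. Hence `CS⁻¹Cᵀ R = CS⁻¹SY = CY = I`.
-/

namespace Matrix

variable {m n K : Type*} [Fintype m] [Fintype n] [DecidableEq m]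

theorem isUnit_of_rank_eq_card [DecidableEq n] [Field K] {A : Matrix n n K}
    (h : A.rank = Fintype.card n) : IsUnit A := by
  rw [← mulVec_surjective_iff_isUnit, ← coe_mulVecLin, ← LinearMap.range_eq_top]
  exact Submodule.eq_top_of_finrank_eq (by rwa [Module.finrank_fintype_fun_eq_card])

theorem isUnit_mul_transpose_of_rank_eq_card [Field K] [LinearOrder K] [IsStrictOrderedRing K]
    {C : Matrix m n K} (h : C.rank = Fintype.card m) : IsUnit (C * Cᵀ) :=
  isUnit_of_rank_eq_card (by rw [rank_self_mul_transpose, h])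

theorem mul_nonsing_inv_mul_mul_eq_one_of_mul_eq [DecidableEq n] [CommRing K] {S : Matrix n n K}
    (hS : IsUnit S.det) {C : Matrix m n K} {B Y : Matrix n m K} {R : Matrix m m K}
    (hCY : C * Y = 1) (hSY : S * Y = B * R) : C * S⁻¹ * B * R = 1 :=
  calc C * S⁻¹ * B * R = C * (S⁻¹ * (S * Y)) := by rw [hSY]; simp only [Matrix.mul_assoc]
    _ = 1 := by rw [nonsing_inv_mul_cancel_left _ _ hS, hCY]

end Matrix

namespace IsMoorePenrose

variable {m n : ℕ} {C : Matrix (Fin m) (Fin n) ℝ} {Cp : Matrix (Fin n) (Fin m) ℝ}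

theorem mul_eq_one (h : IsMoorePenrose C Cp) (hC : IsUnit (C * Cᵀ)) : C * Cp = 1 := by
  have hdet := (isUnit_iff_isUnit_det _).mp hC
  calc C * Cp = C * Cp * (C * Cᵀ) * (C * Cᵀ)⁻¹ := (mul_nonsing_inv_cancel_right _ _ hdet).symm
    _ = 1 := by rw [← Matrix.mul_assoc (C * Cp), h.1, mul_nonsing_inv _ hdet]

theorem transpose_mul_transpose (h : IsMoorePenrose C Cp) : Cᵀ * Cpᵀ = Cp * C := by
  rw [← transpose_mul, h.2.2.2]

theorem transpose_mul_inv (h : IsMoorePenrose C Cp) (hC : IsUnit (C * Cᵀ)) :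
    Cᵀ * (C * Cᵀ)⁻¹ = Cp := by
  have hCpCC : Cp * (C * Cᵀ) = Cᵀ := by
    rw [← Matrix.mul_assoc, ← h.transpose_mul_transpose, Matrix.mul_assoc, ← transpose_mul,
      h.mul_eq_one hC, transpose_one, Matrix.mul_one]
  calc Cᵀ * (C * Cᵀ)⁻¹ = Cp * (C * Cᵀ) * (C * Cᵀ)⁻¹ := by rw [hCpCC]
    _ = Cp := mul_nonsing_inv_cancel_right _ _ ((isUnit_iff_isUnit_det _).mp hC)

theorem mul_one_sub_mul (h : IsMoorePenrose C Cp) : C * (1 - Cp * C) = 0 := by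
  rw [Matrix.mul_sub, Matrix.mul_one, ← Matrix.mul_assoc, h.1, sub_self]

theorem isIdempotentElem_one_sub_mul (h : IsMoorePenrose C Cp) :
    IsIdempotentElem (1 - Cp * C) :=
  IsIdempotentElem.one_sub (by rw [IsIdempotentElem, ← Matrix.mul_assoc, h.2.1])

theorem transpose_one_sub_mul (h : IsMoorePenrose C Cp) : (1 - Cp * C)ᵀ = 1 - Cp * C := by
  rw [transpose_sub, transpose_one, h.2.2.2]

end IsMoorePenrose

section

variable {m n K : Type*} [Fintype m] [Fintype n] [DecidableEq n] [Field K]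

theorem woodbury_factor_identity {M N : Matrix n n K} {C : Matrix m n K} {Cp : Matrix n m K}
    {G : Matrix m m K} {ε : K} (hε : ε ≠ 0) (hT : IsUnit (1 + ε⁻¹ • (M * N * N * M)).det)
    (hN : N * N = N) (hG : Cᵀ * G = Cp) (hCCp : Cᵀ * Cpᵀ = 1 - N) :
    (M * M + ε • 1) * (Cp - ε⁻¹ • (N * (M * (1 + ε⁻¹ • (M * N * N * M))⁻¹ * M * Cp))) =
      Cᵀ * (ε • G + Cpᵀ * M * (1 + ε⁻¹ • (M * N * N * M))⁻¹ * M * Cp) := by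
  set T := 1 + ε⁻¹ • (M * N * N * M)
  set X := M * T⁻¹ * M * Cp
  have hKT : ε⁻¹ • (M * N * N * M * T⁻¹) = 1 - T⁻¹ := by
    rw [← mul_nonsing_inv T hT]
    simp only [T, Matrix.add_mul, Matrix.one_mul, Matrix.smul_mul, add_sub_cancel_left]
  have hMMNX : ε⁻¹ • (M * M * (N * X)) = M * M * Cp - X := by
    calc ε⁻¹ • (M * M * (N * X)) = M * (ε⁻¹ • (M * (N * N) * M * T⁻¹)) * M * Cp := by
          simp only [X, hN, Matrix.mul_smul, Matrix.smul_mul, Matrix.mul_assoc]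
      _ = M * M * Cp - X := by
          simp only [← Matrix.mul_assoc, hKT, X, Matrix.mul_sub, Matrix.sub_mul, Matrix.mul_one]
  calc (M * M + ε • 1) * (Cp - ε⁻¹ • (N * X))
      = M * M * Cp - ε⁻¹ • (M * M * (N * X)) + ε • Cp - (ε * ε⁻¹) • (N * X) := by
        simp only [Matrix.add_mul, Matrix.mul_sub, Matrix.mul_smul, Matrix.smul_mul,
          Matrix.one_mul]
        module
    _ = ε • Cp + (1 - N) * X := by
        rw [hMMNX, mul_inv_cancel₀ hε, one_smul, Matrix.sub_mul, Matrix.one_mul]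
        abel
    _ = Cᵀ * (ε • G + Cpᵀ * M * T⁻¹ * M * Cp) := by
        simp only [Matrix.mul_add, Matrix.mul_smul, hG, X, ← hCCp, Matrix.mul_assoc]

end

/-- Woodbury-type identity: for every ε > 0,
(C(Q+εI)⁻¹Cᵀ)⁻¹ = ε(CCᵀ)⁻¹ + C⁺ᵀ M (I + ε⁻¹MNNM)⁻¹ M C⁺, where all the inverses
appearing exist. -/
theorem woodbury_identity (n m : ℕ)
    (Q M : Matrix (Fin n) (Fin n) ℝ) (hQ : Q.PosSemidef)
    (hM : M.PosSemidef) (hMsq : M * M = Q)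
    (C : Matrix (Fin m) (Fin n) ℝ) (hrankC : C.rank = m)
    (Cp : Matrix (Fin n) (Fin m) ℝ) (hCp : IsMoorePenrose C Cp)
    (N : Matrix (Fin n) (Fin n) ℝ) (hN : N = 1 - Cp * C) :
    IsUnit (C * Cᵀ) ∧
    ∀ ε : ℝ, 0 < ε →
      IsUnit (C * (Q + ε • (1 : Matrix (Fin n) (Fin n) ℝ))⁻¹ * Cᵀ) ∧
      IsUnit ((1 : Matrix (Fin n) (Fin n) ℝ) + ε⁻¹ • (M * N * N * M)) ∧
      (C * (Q + ε • (1 : Matrix (Fin n) (Fin n) ℝ))⁻¹ * Cᵀ)⁻¹ =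
        ε • (C * Cᵀ)⁻¹ +
          Cpᵀ * M * ((1 : Matrix (Fin n) (Fin n) ℝ) + ε⁻¹ • (M * N * N * M))⁻¹ * M * Cp := by
  subst hMsq
  have hCCt : IsUnit (C * Cᵀ) :=
    isUnit_mul_transpose_of_rank_eq_card (hrankC.trans (Fintype.card_fin m).symm)
  have hNN : N * N = N := hN ▸ hCp.isIdempotentElem_one_sub_mul.eq
  have hNt : Nᵀ = N := hN ▸ hCp.transpose_one_sub_mul
  have hCN : C * N = 0 := hN ▸ hCp.mul_one_sub_mul
  have hCCp : Cᵀ * Cpᵀ = 1 - N := by rw [hCp.transpose_mul_transpose, hN, sub_sub_cancel]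
  refine ⟨hCCt, fun ε hε => ?_⟩
  have hS : (M * M + ε • 1).PosDef := PosDef.posSemidef_add hQ (PosDef.one.smul hε)
  have hK : (M * N * N * M).PosSemidef := by
    have hMN : (M * N)ᴴ = N * M := by
      rw [conjTranspose_mul, hM.isHermitian.eq, conjTranspose_eq_transpose_of_trivial, hNt]
    have := posSemidef_self_mul_conjTranspose (M * N)
    rwa [hMN, ← Matrix.mul_assoc] at this
  have hT : (1 + ε⁻¹ • (M * N * N * M)).PosDef :=
    PosDef.one.add_posSemidef (hK.smul (inv_nonneg.mpr hε.le))
  have hSY := woodbury_factor_identity hε.ne' ((isUnit_iff_isUnit_det _).mp hT.isUnit) hNN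
    (hCp.transpose_mul_inv hCCt) hCCp
  have hCY : C * (Cp - ε⁻¹ • (N * (M * (1 + ε⁻¹ • (M * N * N * M))⁻¹ * M * Cp))) = 1 := by
    rw [Matrix.mul_sub, hCp.mul_eq_one hCCt, Matrix.mul_smul, ← Matrix.mul_assoc, hCN,
      Matrix.zero_mul, smul_zero, sub_zero]
  have hinv := mul_nonsing_inv_mul_mul_eq_one_of_mul_eq
    ((isUnit_iff_isUnit_det _).mp hS.isUnit) hCY hSY
  exact ⟨(isUnit_iff_isUnit_det _).mpr (isUnit_det_of_right_inverse hinv), hT.isUnit,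
    inv_eq_right_inv hinv⟩
end
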